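/- arXiv:2504.03605 — 3 statements merged into one kernel-verified Lean document; each statement's English description precedes it below -/
import Mathlib

section
/- For all real ε in (0, 1/2], (1 + 0.9·ε^{1/3})^{2ε} > 1 + (4/e²)·ε^{7/4}. -/
theorem stmt_2 (ε : ℝ) (hε0 : 0 < ε) (hε1 : ε ≤ 1 / 2) :
    (1 + 0.9 * ε ^ ((1 : ℝ) / 3)) ^ (2 * ε) >
      1 + 4 / Real.exp 1 ^ 2 * ε ^ ((7 : ℝ) / 4) := by
  have hp13 : 0 < ε ^ ((1:ℝ)/3) := Real.rpow_pos_of_pos hε0 _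
  have h13 : ε ^ ((1:ℝ)/3) ≤ 0.8 := by
    have h1 : ε ^ ((1:ℝ)/3) ≤ (0.512:ℝ) ^ ((1:ℝ)/3) :=
      Real.rpow_le_rpow hε0.le (by linarith) (by norm_num)
    have h2 : (0.512:ℝ) ^ ((1:ℝ)/3) = 0.8 := by
      rw [show (0.512:ℝ) = 0.8 ^ (3:ℕ) by norm_num, ← Real.rpow_natCast,
        ← Real.rpow_mul (by norm_num)]
      norm_num
    linarith
  set a := 0.9 * ε ^ ((1:ℝ)/3) with ha_def
  have ha : 0 < a := by positivity
  have ha' : a ≤ 0.72 := by rw [ha_def]; nlinarith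
  have h1a : (0:ℝ) < 1 + a := by linarith
  have hlog : a / 1.72 ≤ Real.log (1 + a) := by
    have h := Real.log_le_sub_one_of_pos (show (0:ℝ) < 1/(1+a) by positivity)
    rw [Real.log_div one_ne_zero (by linarith), Real.log_one] at h
    have h3 : a / 1.72 ≤ 1 - 1/(1+a) := by
      have heq : 1 - 1/(1+a) = a/(1+a) := by field_simp; ring
      rw [heq, div_le_div_iff₀ (by norm_num) h1a]
      nlinarith
    linarith
  have h43 : ε ^ ((4:ℝ)/3) = ε * ε ^ ((1:ℝ)/3) := by
    rw [show (4:ℝ)/3 = 1 + 1/3 by norm_num, Real.rpow_add hε0, Real.rpow_one]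
  have h4374 : ε ^ ((7:ℝ)/4) ≤ ε ^ ((4:ℝ)/3) :=
    Real.rpow_le_rpow_of_exponent_ge hε0 (by linarith) (by norm_num)
  have h74 : 0 < ε ^ ((7:ℝ)/4) := Real.rpow_pos_of_pos hε0 _
  have he : (2.7182818283:ℝ) < Real.exp 1 := Real.exp_one_gt_d9
  have he2 : (4:ℝ) < Real.exp 1 ^ 2 := by nlinarith
  have hrhs : 4 / Real.exp 1 ^ 2 * ε ^ ((7:ℝ)/4) < ε ^ ((4:ℝ)/3) := by
    have : 4 / Real.exp 1 ^ 2 < 1 := by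
      rw [div_lt_one (by positivity)]; exact he2
    nlinarith
  have hmid : ε ^ ((4:ℝ)/3) ≤ 2 * ε * Real.log (1 + a) := by
    have h1 : 2 * ε * (a / 1.72) ≤ 2 * ε * Real.log (1 + a) := by
      have := mul_le_mul_of_nonneg_left hlog (by linarith : (0:ℝ) ≤ 2 * ε)
      linarith
    have h2 : ε ^ ((4:ℝ)/3) ≤ 2 * ε * (a / 1.72) := by
      rw [h43, ha_def]
      have hp : (0:ℝ) < ε * ε ^ ((1:ℝ)/3) := mul_pos hε0 hp13
      have hq : 2 * ε * (0.9 * ε ^ ((1:ℝ)/3) / 1.72) = (1.8/1.72) * (ε * ε ^ ((1:ℝ)/3)) := by ring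
      rw [hq]
      nlinarith
    linarith
  have hexp : 2 * ε * Real.log (1 + a) + 1 ≤ Real.exp (2 * ε * Real.log (1 + a)) :=
    Real.add_one_le_exp _
  rw [Real.rpow_def_of_pos h1a]
  calc 1 + 4 / Real.exp 1 ^ 2 * ε ^ ((7:ℝ)/4) < 1 + ε ^ ((4:ℝ)/3) := by linarith
    _ ≤ 1 + 2 * ε * Real.log (1 + a) := by linarith
    _ ≤ Real.exp (Real.log (1 + a) * (2 * ε)) := by
        rw [show Real.log (1 + a) * (2 * ε) = 2 * ε * Real.log (1 + a) from mul_comm _ _]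
        linarith
end

section
/- Let φ : {0,1}ⁿ → {0,1}ᴺ be an isometric embedding of the Hamming metric into the edit metric. Then the function η_x(i) (the unique output index flipped when input bit i of x is flipped) does not depend on x: for all x, y ∈ {0,1}ⁿ and all i ∈ [n], η_x(i) = η_y(i). -/
/-- The cost structure of the former Mathlib `Levenshtein.Cost`. -/
structure Levenshtein.Cost (α β δ : Type*) where
  delete : α → δ
  insert : β → δ
  substitute : α → β → δ

/-- The former Mathlib `Levenshtein.defaultCost`. -/
def Levenshtein.defaultCost {α : Type*} [DecidableEq α] : Levenshtein.Cost α α ℕ :=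
  ⟨fun _ => 1, fun _ => 1, fun a b => if a = b then 0 else 1⟩

/-- The former Mathlib `levenshtein`, by its defining recursion. -/
def levenshtein {α β δ : Type*} [AddZeroClass δ] [Min δ] (C : Levenshtein.Cost α β δ) :
    List α → List β → δ
  | [], [] => 0
  | [], y :: ys => levenshtein C [] ys + C.insert y
  | x :: xs, [] => C.delete x + levenshtein C xs []
  | x :: xs, y :: ys =>
      min (C.delete x + levenshtein C xs (y :: ys))
        (min (C.insert y + levenshtein C (x :: xs) ys) (C.substitute x y + levenshtein C xs ys))

/-- Edit (Levenshtein) distance between two lists. -/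
def editDist {α : Type*} [DecidableEq α] (x y : List α) : ℕ :=
  levenshtein Levenshtein.defaultCost x y

/-- Flip the `i`-th bit of a binary string. -/
def flipBit {n : ℕ} (x : Fin n → Bool) (i : Fin n) : Fin n → Bool :=
  Function.update x i (!x i)

lemma editDist_self {α : Type*} [DecidableEq α] (l : List α) : editDist l l = 0 := by
  induction l with
  | nil => simp [editDist, levenshtein]
  | cons a t ih =>
    have : editDist (a :: t) (a :: t) ≤ 0 := by
      rw [editDist, levenshtein.eq_4]
      refine le_trans (min_le_right _ _) (le_trans (min_le_right _ _) ?_)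
      simp [Levenshtein.defaultCost, editDist] at ih ⊢
      exact ih
    omega

lemma flipBit_apply_self {n : ℕ} (x : Fin n → Bool) (i : Fin n) :
    flipBit x i i = !x i := by simp [flipBit]

lemma flipBit_apply_ne {n : ℕ} (x : Fin n → Bool) {i j : Fin n} (h : j ≠ i) :
    flipBit x i j = x j := by simp [flipBit, Function.update_of_ne h]

theorem stmt_8 {n N : ℕ} (φ : (Fin n → Bool) → (Fin N → Bool))
    (hiso : ∀ x y : Fin n → Bool,
      editDist (List.ofFn (φ x)) (List.ofFn (φ y)) = hammingDist x y)
    (η : (Fin n → Bool) → Fin n → Fin N)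
    (hη : ∀ (x : Fin n → Bool) (i : Fin n),
      φ (flipBit x i) = Function.update (φ x) (η x i) (!(φ x (η x i)))) :
    ∀ (x y : Fin n → Bool) (i : Fin n), η x i = η y i := by
  -- injectivity of φ
  have hinj : ∀ a b : Fin n → Bool, φ a = φ b → a = b := by
    intro a b h
    have := hiso a b
    rw [h, editDist_self] at this
    exact eq_of_hammingDist_eq_zero this.symm
  -- adjacent step: η x i = η (flipBit x j) i
  have step : ∀ (x : Fin n → Bool) (j i : Fin n), η x i = η (flipBit x j) i := by
    intro x j i
    by_cases hij : i = j
    · subst hij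
      -- case j = i
      set y := flipBit x i with hy
      set a := η x i
      set c := η y i
      by_contra hac
      -- φ y = update (φ x) a …, φ x = φ (flipBit y i) = update (φ y) c …
      have h1 : φ y = Function.update (φ x) a (!(φ x a)) := hη x i
      have h2 : φ (flipBit y i) = Function.update (φ y) c (!(φ y c)) := hη y i
      have hyx : flipBit y i = x := by
        funext k
        by_cases hk : k = i
        · subst hk; simp [hy, flipBit]
        · rw [flipBit_apply_ne _ hk, hy, flipBit_apply_ne _ hk]
      rw [hyx] at h2
      -- evaluate at a : φ y a ≠ φ x a, but from h2 (a ≠ c) φ x a = φ y a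
      have e1 : φ y a = !(φ x a) := by rw [h1]; simp
      have e2 : φ x a = φ y a := by
        rw [h2]; exact Function.update_of_ne hac _ _
      simp [e1] at e2
    · -- case i ≠ j
      set y := flipBit x j with hy
      set x' := flipBit x i with hx'
      set a := η x i with ha
      set b := η x j with hb
      set c := η y i with hc
      have hxi' : φ x' = Function.update (φ x) a (!(φ x a)) := hη x i
      have hxj : φ y = Function.update (φ x) b (!(φ x b)) := hη x j
      have hyi : φ (flipBit y i) = Function.update (φ y) c (!(φ y c)) := hη y i
      -- a ≠ b
      have hab : a ≠ b := by
        intro h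
        have : φ x' = φ y := by rw [hxi', hxj, h]
        have := hinj _ _ this
        have := congrFun this i
        rw [hx', hy, flipBit_apply_self, flipBit_apply_ne _ hij] at this
        simp at this
      -- c ≠ b
      have hcb : c ≠ b := by
        intro h
        have hyb : φ y b = !(φ x b) := by rw [hxj]; simp
        have : φ (flipBit y i) = φ x := by
          rw [hyi, h, hyb, hxj]
          funext k
          by_cases hk : k = b
          · subst hk; simp
          · simp [Function.update_of_ne hk]
        have := hinj _ _ this
        have := congrFun this i
        rw [flipBit_apply_self, hy, flipBit_apply_ne _ hij] at this
        simp at this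
      -- flips commute : flipBit y i = flipBit x' j
      have hcomm : flipBit y i = flipBit x' j := by
        funext k
        by_cases hk1 : k = i
        · subst hk1
          rw [flipBit_apply_self, flipBit_apply_ne _ hij, hy, hx',
            flipBit_apply_ne _ hij, flipBit_apply_self]
        · by_cases hk2 : k = j
          · subst hk2
            rw [flipBit_apply_ne _ hk1, flipBit_apply_self, hy, hx',
              flipBit_apply_self, flipBit_apply_ne _ hk1]
          · rw [flipBit_apply_ne _ hk1, flipBit_apply_ne _ hk2, hy, hx',
              flipBit_apply_ne _ hk2, flipBit_apply_ne _ hk1]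
      set d := η x' j with hd
      have hx'j : φ (flipBit x' j) = Function.update (φ x') d (!(φ x' d)) := hη x' j
      have key : φ (flipBit y i) = Function.update (φ x') d (!(φ x' d)) := by
        rw [hcomm, hx'j]
      by_contra hac
      -- evaluate key at b : lhs = !(φ x b), rhs must then force b = d
      have lb : φ (flipBit y i) b = !(φ x b) := by
        rw [hyi, Function.update_of_ne (Ne.symm hcb), hxj, Function.update_self]
      have rb : φ x' b = φ x b := by
        rw [hxi', Function.update_of_ne (fun h => hab h.symm)]
      have hbd : b = d := by
        by_contra hbd
        have := congrFun key b
        rw [lb, Function.update_of_ne hbd, rb] at this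
        simp at this
      -- evaluate key at c
      have lc : φ (flipBit y i) c = !(φ x c) := by
        rw [hyi]
        simp only [Function.update_self]
        rw [hxj, Function.update_of_ne hcb]
      have rc : φ x' c = φ x c := by
        rw [hxi', Function.update_of_ne (fun h => hac h.symm)]
      have hcd : c = d := by
        by_contra hcd
        have := congrFun key c
        rw [lc, Function.update_of_ne hcd, rc] at this
        simp at this
      exact hcb (hcd.trans hbd.symm)
  -- general case by strong induction on hammingDist x y
  intro x y i
  generalize hgen : hammingDist x y = m
  induction m using Nat.strong_induction_on generalizing x y with
  | _ m IH =>
    by_cases hxy : x = y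
    · rw [hxy]
    · have : hammingDist x y ≠ 0 := fun h => hxy (eq_of_hammingDist_eq_zero h)
      obtain ⟨j, hj⟩ : ∃ j, x j ≠ y j := by
        by_contra h
        push_neg at h
        exact hxy (funext h)
      have hflip : flipBit x j j = y j := by
        rw [flipBit_apply_self]
        cases hx : x j <;> cases hyj : y j <;> simp_all
      have hlt : hammingDist (flipBit x j) y < m := by
        rw [← hgen]
        unfold hammingDist
        apply Finset.card_lt_card
        constructor
        · intro k hk
          simp only [Finset.mem_filter, Finset.mem_univ, true_and] at hk ⊢
          by_cases hkj : k = j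
          · subst hkj; rw [hflip] at hk; exact absurd rfl hk
          · rwa [flipBit_apply_ne _ hkj] at hk
        · intro hsub
          have := hsub (by simp [hj] : j ∈ Finset.univ.filter fun k => x k ≠ y k)
          simp only [Finset.mem_filter, Finset.mem_univ, true_and, hflip] at this
          exact this rfl
      calc η x i = η (flipBit x j) i := step x j i
        _ = η y i := IH _ hlt _ _ rfl
end

section
/- Let P and Q be strings and χ an edit distance alignment between P and Q in which P[i] is matched (aligned) to Q[j] but P[i−1] is not aligned to Q[j−1] (where i, j ≥ 2). Let Q' be Q with Q[j−1] replaced by P[i−1]. Then there exists an alignment χ' between P and Q' that aligns P[i−1] to Q'[j−1], retains the pair (i,j), and has cost at most the cost of χ: cost_{P}^{Q'}(χ') ≤ cost_{P}^{Q}(χ). -/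
/-- An edit-distance alignment between lists `x` and `y`: a set of pairs of
(0-based) positions, strictly increasing in both coordinates, within range. -/
def IsAlignment {α : Type*} (x y : List α) (A : List (ℕ × ℕ)) : Prop :=
  A.Chain' (fun p q => p.1 < q.1 ∧ p.2 < q.2) ∧
    ∀ p ∈ A, p.1 < x.length ∧ p.2 < y.length

/-- An alignment is nowhere-vertical if no position is aligned to itself. -/
def NowhereVertical (A : List (ℕ × ℕ)) : Prop := ∀ p ∈ A, p.1 ≠ p.2

/-- Cost of an alignment: mismatched aligned pairs (substitutions), plus
unaligned positions of `x` (deletions), plus unaligned positions of `y`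
(insertions). -/
def alignCost {α : Type*} [DecidableEq α] (x y : List α) (A : List (ℕ × ℕ)) : ℕ :=
  A.countP (fun p => decide (x[p.1]? ≠ y[p.2]?)) +
    (x.length - A.length) + (y.length - A.length)

/-- Length of the longest nowhere-vertical common subsequence of `x` and `y`:
the largest number of pairs in a nowhere-vertical alignment all of whose
aligned pairs are matches. -/
noncomputable def nvLCS {α : Type*} (x y : List α) : ℕ :=
  sSup {k | ∃ A : List (ℕ × ℕ), IsAlignment x y A ∧ NowhereVertical A ∧
    (∀ p ∈ A, x[p.1]? = y[p.2]?) ∧ A.length = k}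

/-- Nowhere-vertical edit distance: minimum cost of a nowhere-vertical
alignment. -/
noncomputable def nvEdit {α : Type*} [DecidableEq α] (x y : List α) : ℕ :=
  sInf {c | ∃ A : List (ℕ × ℕ), IsAlignment x y A ∧ NowhereVertical A ∧
    alignCost x y A = c}
instance : IsTrans (ℕ × ℕ) (fun p q => p.1 < q.1 ∧ p.2 < q.2) :=
  ⟨fun _ _ _ h1 h2 => ⟨h1.1.trans h2.1, h1.2.trans h2.2⟩⟩

theorem stmt_18 {α : Type*} [DecidableEq α] [Inhabited α] (P Q : List α)
    (χ : List (ℕ × ℕ)) (hχ : IsAlignment P Q χ) (i j : ℕ) (hi : 1 ≤ i) (hj : 1 ≤ j)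
    (hij : (i, j) ∈ χ) (hnot : (i - 1, j - 1) ∉ χ) :
    ∃ χ' : List (ℕ × ℕ),
      IsAlignment P (Q.set (j - 1) (P.getD (i - 1) default)) χ' ∧
      (i - 1, j - 1) ∈ χ' ∧ (i, j) ∈ χ' ∧
      alignCost P (Q.set (j - 1) (P.getD (i - 1) default)) χ' ≤ alignCost P Q χ := by
  classical
  set R : ℕ × ℕ → ℕ × ℕ → Prop := fun p q => p.1 < q.1 ∧ p.2 < q.2 with hR
  obtain ⟨hchain, hbound⟩ := hχ
  obtain ⟨hiP, hjQ⟩ := hbound _ hij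
  obtain ⟨l₁, l₂, rfl⟩ := List.append_of_mem hij
  set Q' := Q.set (j - 1) (P.getD (i - 1) default) with hQ'
  have hQ'len : Q'.length = Q.length := List.length_set ..
  have hpw : (l₁ ++ (i, j) :: l₂).Pairwise R := List.isChain_iff_pairwise.mp hchain
  obtain ⟨hpw1, hpw2, hsep⟩ := List.pairwise_append.mp hpw
  have hlt : ∀ p ∈ l₁, p.1 < i ∧ p.2 < j := fun p hp =>
    hsep p hp (i, j) (List.mem_cons_self)
  set pred : ℕ × ℕ → Bool := fun p => decide (p.1 < i - 1 ∧ p.2 < j - 1) with hpred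
  -- at most one element of l₁ is dropped
  have hdrop : (l₁.filter (fun p => !pred p)).length ≤ 1 := by
    have hpwd : (l₁.filter (fun p => !pred p)).Pairwise R :=
      hpw1.sublist (List.filter_sublist)
    rcases hd : l₁.filter (fun p => !pred p) with _ | ⟨a, _ | ⟨b, t⟩⟩
    · simp
    · simp
    · exfalso
      have hab : R a b := by
        rw [hd] at hpwd
        exact (List.pairwise_cons.mp hpwd).1 b (List.mem_cons_self)
      have ha : a ∈ l₁.filter (fun p => !pred p) := by rw [hd]; simp
      have hb : b ∈ l₁.filter (fun p => !pred p) := by rw [hd]; simp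
      have ha1 := List.of_mem_filter ha
      have hb1 := List.of_mem_filter hb
      have haM := hlt a (List.mem_of_mem_filter ha)
      have hbM := hlt b (List.mem_of_mem_filter hb)
      have hane : a ≠ (i - 1, j - 1) := fun h =>
        hnot (by rw [← h]; exact List.mem_append_left _ (List.mem_of_mem_filter ha))
      have hbne : b ≠ (i - 1, j - 1) := fun h =>
        hnot (by rw [← h]; exact List.mem_append_left _ (List.mem_of_mem_filter hb))
      simp only [hpred, Bool.not_eq_true', decide_eq_false_iff_not, not_and, not_lt] at ha1 hb1
      have hane' : a.1 ≠ i - 1 ∨ a.2 ≠ j - 1 := by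
        by_contra h; push_neg at h; exact hane (Prod.ext h.1 h.2)
      have hbne' : b.1 ≠ i - 1 ∨ b.2 ≠ j - 1 := by
        by_contra h; push_neg at h; exact hbne (Prod.ext h.1 h.2)
      obtain ⟨hab1, hab2⟩ := hab
      omega
  have hlen : l₁.length ≤ (l₁.filter pred).length + 1 := by
    have := List.length_eq_length_filter_add (l := l₁) pred
    omega
  refine ⟨l₁.filter pred ++ (i - 1, j - 1) :: (i, j) :: l₂, ⟨?_, ?_⟩, ?_, ?_, ?_⟩
  · -- Chain'
    unfold List.Chain'
    rw [List.isChain_append]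
    refine ⟨List.isChain_iff_pairwise.mpr (hpw1.sublist (List.filter_sublist)), ?_, ?_⟩
    · rw [List.isChain_cons_cons]
      exact ⟨⟨by omega, by omega⟩, (List.isChain_append.mp hchain).2.1⟩
    · intro x hx y hy
      have hxk : x ∈ l₁.filter pred := List.mem_of_mem_getLast? hx
      have hxp := List.of_mem_filter hxk
      simp only [hpred, decide_eq_true_eq] at hxp
      simp only [List.head?_cons, Option.mem_def, Option.some.injEq] at hy
      subst hy
      exact ⟨hxp.1, hxp.2⟩
  · -- bounds
    intro p hp
    rw [hQ'len]
    rcases List.mem_append.mp hp with hp | hp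
    · exact hbound _ (List.mem_append_left _ (List.mem_of_mem_filter hp))
    · rcases List.mem_cons.mp hp with hp | hp
      · subst hp
        exact ⟨by omega, by omega⟩
      · rcases List.mem_cons.mp hp with hp | hp
        · subst hp; exact ⟨hiP, hjQ⟩
        · exact hbound _ (List.mem_append_right _ (List.mem_cons_of_mem _ hp))
  · exact List.mem_append_right _ (List.mem_cons_self)
  · exact List.mem_append_right _ (List.mem_cons_of_mem _ (List.mem_cons_self))
  · -- cost
    simp only [alignCost, hQ'len]
    set f : ℕ × ℕ → Bool := fun p => decide (P[p.1]? ≠ Q[p.2]?) with hf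
    set f' : ℕ × ℕ → Bool := fun p => decide (P[p.1]? ≠ Q'[p.2]?) with hf'
    have hagree : ∀ p : ℕ × ℕ, p.2 ≠ j - 1 → f' p = f p := by
      intro p hp
      simp only [hf, hf', hQ', List.getElem?_set_ne hp.symm]
    have hmid : f' (i - 1, j - 1) = false := by
      have h1 : Q'[j-1]? = some (P.getD (i - 1) default) :=
        List.getElem?_set_eq_of_lt _ (by omega)
      have h2 : P[i-1]? = some (P.getD (i - 1) default) := by
        rw [List.getD_eq_getElem _ _ (show i - 1 < P.length by omega),
          List.getElem?_eq_getElem (by omega)]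
      show decide (P[(i-1, j-1).1]? ≠ Q'[(i-1, j-1).2]?) = false
      simp only [h1, h2]
      simp
    have hcount : (l₁.filter pred ++ (i - 1, j - 1) :: (i, j) :: l₂).countP f'
        ≤ (l₁ ++ (i, j) :: l₂).countP f := by
      rw [List.countP_append, List.countP_append, List.countP_cons, List.countP_cons,
        List.countP_cons, hmid]
      have e1 : (l₁.filter pred).countP f' = (l₁.filter pred).countP f := by
        apply List.countP_congr
        intro x hx
        have hxp := List.of_mem_filter hx
        simp only [hpred, decide_eq_true_eq] at hxp
        rw [hagree x (by omega)]
      have e2 : l₂.countP f' = l₂.countP f := by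
        apply List.countP_congr
        intro x hx
        have hx2 : j < x.2 := (List.rel_of_pairwise_cons hpw2 hx).2
        rw [hagree x (by omega)]
      have e3 : f' (i, j) = f (i, j) := hagree _ (by show j ≠ j - 1; omega)
      rw [e1, e2, e3]
      simp only [Bool.false_eq_true, if_false]
      have e4 : (l₁.filter pred).countP f ≤ l₁.countP f := (List.filter_sublist).countP_le
      omega
    have hLen' : (l₁ ++ (i, j) :: l₂).length
        ≤ (l₁.filter pred ++ (i - 1, j - 1) :: (i, j) :: l₂).length := by
      simp only [List.length_append, List.length_cons]
      omega
    exact add_le_add (add_le_add hcount (Nat.sub_le_sub_left hLen' _))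
      (Nat.sub_le_sub_left hLen' _)
end
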